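/- arXiv:2309.12385 — 9 statements merged into one kernel-verified Lean document; each statement's English description precedes it below -/
import Mathlib

section
/- If R_z^* > 1 and 2 R_{z1} < 1, then R_z > 1. -/
theorem zikv_threshold_gt_one
    (Lam bz bm am Lm mu mum muz dz : ℝ)
    (hLam : 0 < Lam) (hbz : 0 < bz) (hbm : 0 < bm) (ham : 0 < am) (hLm : 0 < Lm)
    (hmu : 0 < mu) (hmum : 0 < mum) (hmuz : 0 < muz) (hdz : 0 < dz)
    (κ1 Rz1 Rz2bar Rz2 Rz Rzstar : ℝ)
    (hκ1 : κ1 = muz + dz + mu)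
    (hRz1 : Rz1 = bz * Lam / (2 * mu * κ1))
    (hRz2bar : Rz2bar = bm * am * Lm * Lam / (mu * mum ^ 2 * κ1))
    (hRz2 : Rz2 = Real.sqrt (Rz1 ^ 2 + Rz2bar))
    (hRz : Rz = Rz1 + Rz2)
    (hRzstar : Rzstar = 2 * Rz1 + Rz2bar)
    (h1 : 1 < Rzstar) (h2 : 2 * Rz1 < 1) :
    1 < Rz := by
  have hkey : 1 - Rz1 < Rz2 := by
    rw [hRz2]
    rw [show (1 - Rz1 : ℝ) = Real.sqrt ((1 - Rz1) ^ 2) from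
      (Real.sqrt_sq (by linarith)).symm]
    apply Real.sqrt_lt_sqrt (by positivity)
    nlinarith [hRzstar ▸ h1]
  rw [hRz]; linarith
end

section
/- If R_h > 1, then the point (S*, I_h*, A*) with S* = (σ_1+μ)/β_h, I_h* = (μ/β_h)(R_h − 1), A* = μσ_1(R_h − 1)/(β_h(μ_h+μ)) has all three coordinates strictly positive and satisfies the equilibrium equations 0 = Λ − β_h I_h* S* − μ S*, 0 = β_h I_h* S* − (σ_1+μ) I_h*, and 0 = σ_1 I_h* − (μ_h+μ) A*. -/
/-- If `R_h > 1`, the endemic point of the HIV/AIDS model is positive and solves the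
equilibrium system. -/
theorem hiv_endemic_equilibrium_exists
    (Lam bh mu muh s1 : ℝ)
    (hLam : 0 < Lam) (hbh : 0 < bh) (hmu : 0 < mu) (hmuh : 0 < muh) (hs1 : 0 < s1)
    (Rh : ℝ) (hRh : Rh = bh * Lam / (mu * (s1 + mu)))
    (h : 1 < Rh)
    (S Ih A : ℝ)
    (hS : S = (s1 + mu) / bh)
    (hIh : Ih = mu / bh * (Rh - 1))
    (hA : A = mu * s1 * (Rh - 1) / (bh * (muh + mu))) :
    (0 < S ∧ 0 < Ih ∧ 0 < A) ∧
      0 = Lam - bh * Ih * S - mu * S ∧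
      0 = bh * Ih * S - (s1 + mu) * Ih ∧
      0 = s1 * Ih - (muh + mu) * A := by
  have hsm : 0 < s1 + mu := by linarith
  have hmm : 0 < muh + mu := by linarith
  have hR1 : 0 < Rh - 1 := by linarith
  subst hRh hS hIh hA
  refine ⟨⟨by positivity, by positivity, by positivity⟩, ?_, ?_, ?_⟩ <;>
    field_simp <;> ring
end

section
/- If (S, I_h, A) is a real solution of the HIV/AIDS equilibrium system with I_h ≠ 0, then S = (σ_1+μ)/β_h, I_h = (μ/β_h)(R_h − 1), and A = μσ_1(R_h − 1)/(β_h(μ_h+μ)); in particular the system has at most one equilibrium with I_h ≠ 0. -/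
/-- Uniqueness of the HIV/AIDS endemic equilibrium: any solution of the equilibrium
system with `I_h ≠ 0` equals the endemic point. -/
theorem hiv_endemic_equilibrium_unique
    (Lam bh mu muh s1 : ℝ)
    (hLam : 0 < Lam) (hbh : 0 < bh) (hmu : 0 < mu) (hmuh : 0 < muh) (hs1 : 0 < s1)
    (Rh : ℝ) (hRh : Rh = bh * Lam / (mu * (s1 + mu)))
    (S Ih A : ℝ) (hIh0 : Ih ≠ 0)
    (e1 : 0 = Lam - bh * Ih * S - mu * S)
    (e2 : 0 = bh * Ih * S - (s1 + mu) * Ih)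
    (e3 : 0 = s1 * Ih - (muh + mu) * A) :
    S = (s1 + mu) / bh ∧
      Ih = mu / bh * (Rh - 1) ∧
      A = mu * s1 * (Rh - 1) / (bh * (muh + mu)) := by
  have hbh' : bh ≠ 0 := ne_of_gt hbh
  have hmu' : mu ≠ 0 := ne_of_gt hmu
  have hsm : s1 + mu ≠ 0 := by positivity
  have hmm : muh + mu ≠ 0 := by positivity
  have hS : S = (s1 + mu) / bh := by
    have h : (bh * S - (s1 + mu)) * Ih = 0 := by linarith [e2]; 
    rcases mul_eq_zero.mp h with h' | h'
    · field_simp; linarith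
    · exact absurd h' hIh0
  have hIh : Ih = mu / bh * (Rh - 1) := by
    subst hRh
    rw [hS] at e1
    field_simp at e1 ⊢
    ring_nf at e1 ⊢
    nlinarith [e1]
  refine ⟨hS, hIh, ?_⟩
  rw [hIh] at e3
  field_simp at e3 ⊢
  linarith
end

section
/- If R_h > 1, then the 2×2 real matrix [[−μ R_h, −(σ_1+μ)], [μ R_h, 0]] (the infectious block of the Jacobian of the HIV/AIDS model at the endemic equilibrium) has strictly positive determinant and strictly negative trace, and consequently every complex eigenvalue of this matrix has strictly negative real part. -/
/-- If `R_h > 1`, the infectious block of the Jacobian at the HIV endemic equilibrium has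
positive determinant and negative trace, so every complex eigenvalue has negative real
part. -/
theorem hiv_endemic_jacobian_stable
    (Lam bh mu s1 : ℝ)
    (hLam : 0 < Lam) (hbh : 0 < bh) (hmu : 0 < mu) (hs1 : 0 < s1)
    (Rh : ℝ) (hRh : Rh = bh * Lam / (mu * (s1 + mu)))
    (h : 1 < Rh)
    (M : Matrix (Fin 2) (Fin 2) ℝ)
    (hM : M = !![-(mu * Rh), -(s1 + mu);
                 mu * Rh, 0]) :
    0 < M.det ∧ M.trace < 0 ∧
      ∀ z ∈ spectrum ℂ (M.map (Complex.ofReal)), z.re < 0 := by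
  have ha : 0 < mu * Rh := by positivity
  have hc : 0 < s1 + mu := by positivity
  subst hM
  refine ⟨?_, ?_, ?_⟩
  · simp [Matrix.det_fin_two, Matrix.trace_fin_two]
    nlinarith
  · simp [Matrix.trace_fin_two]
    nlinarith
  · intro z hz
    set a : ℝ := mu * Rh with haa
    set c : ℝ := s1 + mu with hcc
    rw [spectrum.mem_iff] at hz
    have hdet : ((algebraMap ℂ (Matrix (Fin 2) (Fin 2) ℂ)) z -
        (!![-(a), -(c); a, 0] : Matrix (Fin 2) (Fin 2) ℝ).map Complex.ofReal).det = 0 := by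
      by_contra hd
      exact hz ((Matrix.isUnit_iff_isUnit_det _).2 (Ne.isUnit hd))
    have heq : z * z + (a : ℂ) * z + (a : ℂ) * (c : ℂ) = 0 := by
      rw [Algebra.algebraMap_eq_smul_one, Matrix.det_fin_two] at hdet
      simp [Matrix.map_apply, Matrix.smul_apply, Matrix.one_apply] at hdet
      ring_nf at hdet ⊢
      linear_combination hdet
    have hre := congrArg Complex.re heq
    have him := congrArg Complex.im heq
    simp [Complex.add_re, Complex.add_im, Complex.mul_re, Complex.mul_im] at hre him
    -- him : z.im * (2 * z.re + a) = 0 (up to form)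
    rcases eq_or_ne z.im 0 with hy | hy
    · rw [hy] at hre
      by_contra hx
      push_neg at hx
      nlinarith
    · have himm : z.im * (2 * z.re + a) = 0 := by linear_combination him
      rcases mul_eq_zero.1 himm with h0 | h0
      · exact absurd h0 hy
      · linarith
end

section
/- Let F(S,A) = Λ − (β_h(μ_h+μ)/σ_1) S A − μ S and G(S,A) = β_h A S − (σ_1+μ) A be the right-hand side of the reduced planar HIV system, and let φ(S,A) = 1/(S A). Then for all S > 0 and A > 0, the divergence ∂/∂S [φ(S,A) F(S,A)] + ∂/∂A [φ(S,A) G(S,A)] equals −Λ/(A S²), which is strictly negative. -/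
/-! Multiplying by the Dulac function `1/(S A)` cancels the bilinear terms: `φ F` becomes
`Λ / (A S) - const` and `φ G` becomes independent of `A`, so the divergence reduces to
`∂/∂S (Λ / (A S)) = -Λ / (A S²)`. -/

theorem deriv_one_div_mul_mul_sub_sub (Lam k m A S : ℝ) (hA : A ≠ 0) (hS : S ≠ 0) :
    deriv (fun s : ℝ => 1 / (s * A) * (Lam - k * s * A - m * s)) S = -Lam / (A * S ^ 2) := by
  have hsimp : (fun s : ℝ => 1 / (s * A) * (Lam - k * s * A - m * s))
      =ᶠ[nhds S] fun s => Lam / A * s⁻¹ - (k + m / A) := by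
    filter_upwards [isOpen_ne.mem_nhds hS] with s hs
    field_simp
    ring
  have hderiv : HasDerivAt (fun s : ℝ => Lam / A * s⁻¹ - (k + m / A))
      (Lam / A * -(S ^ 2)⁻¹) S :=
    ((hasDerivAt_inv hS).const_mul (Lam / A)).sub_const _
  rw [hsimp.deriv_eq, hderiv.deriv]
  field_simp

theorem deriv_one_div_mul_mul_sub (b c S A : ℝ) (hA : A ≠ 0) :
    deriv (fun a : ℝ => 1 / (S * a) * (b * a * S - c * a)) A = 0 := by
  have hconst : (fun a : ℝ => 1 / (S * a) * (b * a * S - c * a))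
      =ᶠ[nhds A] fun _ => (b * S - c) / S := by
    filter_upwards [isOpen_ne.mem_nhds hA] with a ha
    calc 1 / (S * a) * (b * a * S - c * a) = (a⁻¹ * a) * (b * S - c) / S := by ring
      _ = (b * S - c) / S := by rw [inv_mul_cancel₀ ha, one_mul]
  rw [hconst.deriv_eq, deriv_const]

theorem hiv_dulac_divergence_general
    (Lam bh mu muh s1 : ℝ)
    (hLam : 0 < Lam) :
    ∀ S A : ℝ, 0 < S → 0 < A →
      (deriv (fun s : ℝ => (1 / (s * A)) *
          (Lam - bh * (muh + mu) / s1 * s * A - mu * s)) S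
        + deriv (fun a : ℝ => (1 / (S * a)) *
          (bh * a * S - (s1 + mu) * a)) A
        = -Lam / (A * S ^ 2)) ∧
      -Lam / (A * S ^ 2) < 0 := by
  intro S A hS hA
  refine ⟨?_, ?_⟩
  · rw [deriv_one_div_mul_mul_sub_sub _ _ _ _ _ hA.ne' hS.ne',
      deriv_one_div_mul_mul_sub _ _ _ _ hA.ne', add_zero]
  · rw [neg_div, neg_lt_zero]
    positivity

/-- Dulac function computation for the reduced planar HIV system: with
`φ(S,A) = 1/(SA)`, the divergence of `φ·(F,G)` equals `-Λ/(A S²) < 0` on the positive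
quadrant. -/
theorem hiv_dulac_divergence
    (Lam bh mu muh s1 : ℝ)
    (hLam : 0 < Lam) (hbh : 0 < bh) (hmu : 0 < mu) (hmuh : 0 < muh) (hs1 : 0 < s1) :
    ∀ S A : ℝ, 0 < S → 0 < A →
      (deriv (fun s : ℝ => (1 / (s * A)) *
          (Lam - bh * (muh + mu) / s1 * s * A - mu * s)) S
        + deriv (fun a : ℝ => (1 / (S * a)) *
          (bh * a * S - (s1 + mu) * a)) A
        = -Lam / (A * S ^ 2)) ∧
      -Lam / (A * S ^ 2) < 0 :=
  hiv_dulac_divergence_general Lam bh mu muh s1 hLam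
end

section
/- The 2×2 real matrix M = [[β_z Λ/(μ κ_1), β_m Λ/(μ μ_m)], [α_m Λ_m/(μ_m κ_1), 0]] (the next-generation matrix F V⁻¹ of the ZIKV model) has characteristic polynomial λ² − 2 R_{z1} λ − R̄_{z2}, its eigenvalues are exactly R_{z1} + R_{z2} and R_{z1} − R_{z2}, and its spectral radius (the maximum of the absolute values of its eigenvalues) equals R_z. -/
open Polynomial

/-- The next-generation matrix of the ZIKV model has characteristic polynomial
`λ² − 2R_{z1}λ − R̄_{z2}`, eigenvalues `R_{z1} ± R_{z2}`, and spectral radius `R_z`. -/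
theorem zikv_next_generation_matrix
    (Lam bz bm am Lm mu mum muz dz : ℝ)
    (hLam : 0 < Lam) (hbz : 0 < bz) (hbm : 0 < bm) (ham : 0 < am) (hLm : 0 < Lm)
    (hmu : 0 < mu) (hmum : 0 < mum) (hmuz : 0 < muz) (hdz : 0 < dz)
    (κ1 Rz1 Rz2bar Rz2 Rz : ℝ)
    (hκ1 : κ1 = muz + dz + mu)
    (hRz1 : Rz1 = bz * Lam / (2 * mu * κ1))
    (hRz2bar : Rz2bar = bm * am * Lm * Lam / (mu * mum ^ 2 * κ1))
    (hRz2 : Rz2 = Real.sqrt (Rz1 ^ 2 + Rz2bar))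
    (hRz : Rz = Rz1 + Rz2)
    (M : Matrix (Fin 2) (Fin 2) ℝ)
    (hM : M = !![bz * Lam / (mu * κ1), bm * Lam / (mu * mum);
                 am * Lm / (mum * κ1), 0]) :
    M.charpoly = X ^ 2 - C (2 * Rz1) * X - C Rz2bar ∧
      spectrum ℝ M = {Rz1 + Rz2, Rz1 - Rz2} ∧
      max |Rz1 + Rz2| |Rz1 - Rz2| = Rz := by
  have hκ1pos : 0 < κ1 := by rw [hκ1]; positivity
  have hRz1pos : 0 < Rz1 := by rw [hRz1]; positivity
  have hbarpos : 0 < Rz2bar := by rw [hRz2bar]; positivity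
  have hsumnn : (0:ℝ) ≤ Rz1 ^ 2 + Rz2bar := by positivity
  have hRz2sq : Rz2 ^ 2 = Rz1 ^ 2 + Rz2bar := by
    rw [hRz2, Real.sq_sqrt hsumnn]
  have hRz2pos : 0 < Rz2 := by
    rw [hRz2]; exact Real.sqrt_pos.mpr (by positivity)
  have ha : bz * Lam / (mu * κ1) = 2 * Rz1 := by
    rw [hRz1]; field_simp
  have hbc : bm * Lam / (mu * mum) * (am * Lm / (mum * κ1)) = Rz2bar := by
    rw [hRz2bar]; field_simp
  -- characteristic polynomial
  have hcp : M.charpoly = X ^ 2 - C (2 * Rz1) * X - C Rz2bar := by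
    rw [← ha, ← hbc, hM]
    rw [Matrix.charpoly, Matrix.det_fin_two]
    rw [Matrix.charmatrix_apply_eq, Matrix.charmatrix_apply_eq,
      Matrix.charmatrix_apply_ne _ _ _ (by decide),
      Matrix.charmatrix_apply_ne _ _ _ (by decide)]
    norm_num
    ring
  have hfac : ∀ x : ℝ, x * x - 2 * Rz1 * x - Rz2bar
      = (x - (Rz1 + Rz2)) * (x - (Rz1 - Rz2)) := by
    intro x
    have : Rz2 * Rz2 = Rz1 ^ 2 + Rz2bar := by rw [← hRz2sq]; ring
    nlinarith [this]
  have hdet : ∀ x : ℝ, (algebraMap ℝ (Matrix (Fin 2) (Fin 2) ℝ) x - M).det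
      = x * x - 2 * Rz1 * x - Rz2bar := by
    intro x
    rw [← ha, ← hbc, hM, Matrix.det_fin_two]
    simp [Matrix.algebraMap_matrix_apply]
    ring
  refine ⟨hcp, ?_, ?_⟩
  · ext x
    simp only [Set.mem_insert_iff, Set.mem_singleton_iff]
    rw [spectrum.mem_iff, Matrix.isUnit_iff_isUnit_det, isUnit_iff_ne_zero, not_ne_iff,
      hdet x, hfac x, mul_eq_zero, sub_eq_zero, sub_eq_zero]
  · have h1 : |Rz1 + Rz2| = Rz1 + Rz2 := abs_of_pos (by linarith)
    have h2 : |Rz1 - Rz2| ≤ Rz1 + Rz2 := by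
      rw [abs_le]; constructor <;> nlinarith
    rw [hRz, h1, max_eq_left (by linarith [h2])]
end

section
/- Let a_1 = μ_m − κ_1(2 R_{z1} − 1) and a_2 = μ_m κ_1 (1 − R_z^*). If R_z^* < 1, then a_1 > 0 and a_2 > 0, and every complex root of the quadratic polynomial x² + a_1 x + a_2 has strictly negative real part. (This is the characteristic polynomial of the infectious block of the Jacobian of the ZIKV model at its disease-free equilibrium.) -/
/-- If `R_z^* < 1`, the coefficients of the characteristic polynomial of the infectious
block of the Jacobian of the ZIKV model at the DFE are positive and all its complex
roots have negative real part. -/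
theorem zikv_dfe_characteristic_roots_stable
    (Lam bz bm am Lm mu mum muz dz : ℝ)
    (hLam : 0 < Lam) (hbz : 0 < bz) (hbm : 0 < bm) (ham : 0 < am) (hLm : 0 < Lm)
    (hmu : 0 < mu) (hmum : 0 < mum) (hmuz : 0 < muz) (hdz : 0 < dz)
    (κ1 Rz1 Rz2bar Rzstar : ℝ)
    (hκ1 : κ1 = muz + dz + mu)
    (hRz1 : Rz1 = bz * Lam / (2 * mu * κ1))
    (hRz2bar : Rz2bar = bm * am * Lm * Lam / (mu * mum ^ 2 * κ1))
    (hRzstar : Rzstar = 2 * Rz1 + Rz2bar)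
    (a1 a2 : ℝ)
    (ha1 : a1 = mum - κ1 * (2 * Rz1 - 1))
    (ha2 : a2 = mum * κ1 * (1 - Rzstar))
    (h : Rzstar < 1) :
    0 < a1 ∧ 0 < a2 ∧
      ∀ z : ℂ, z ^ 2 + (a1 : ℂ) * z + (a2 : ℂ) = 0 → z.re < 0 := by
  have hκ1pos : 0 < κ1 := by rw [hκ1]; positivity
  have hRz2barpos : 0 < Rz2bar := by rw [hRz2bar]; positivity
  have hRz1pos : 0 < Rz1 := by rw [hRz1]; positivity
  have h2Rz1 : 2 * Rz1 < 1 := by nlinarith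
  have ha1pos : 0 < a1 := by rw [ha1]; nlinarith
  have ha2pos : 0 < a2 := by
    rw [ha2]; exact mul_pos (mul_pos hmum hκ1pos) (by linarith)
  refine ⟨ha1pos, ha2pos, fun z hz => ?_⟩
  set x := z.re with hx
  set y := z.im with hy
  have hre : x ^ 2 - y ^ 2 + a1 * x + a2 = 0 := by
    have := congrArg Complex.re hz
    simp [pow_two, Complex.mul_re, Complex.mul_im] at this
    nlinarith [this]
  have him : y * (2 * x + a1) = 0 := by
    have := congrArg Complex.im hz
    simp [pow_two, Complex.mul_re, Complex.mul_im] at this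
    nlinarith [this]
  clear hz hRz1 hRz2bar hRzstar hκ1 ha1 ha2 h hRz1pos hRz2barpos h2Rz1 hκ1pos
  clear hLam hbz hbm ham hLm hmu hmum hmuz hdz
  rcases (mul_eq_zero.mp him) with hy0 | hxa
  · -- y = 0 : real root of x² + a1 x + a2 = 0 with positive coefficients
    by_contra hxn
    push_neg at hxn
    nlinarith [hre, hy0, sq_nonneg x, mul_nonneg ha1pos.le hxn]
  · -- 2x + a1 = 0
    linarith
end

section
/- If R_z^* > 1, then c < 0 and the quadratic equation a R² + b R + c = 0 has exactly one positive real root, namely R* = (−b + √(b² − 4ac))/(2a). -/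
/-! Since `a > 0` and `c < 0`, the product of the two roots `c / a` is negative, so the
discriminant exceeds `b ^ 2` and exactly one root, the one taken with `+ √Δ`, is positive. -/

theorem abs_lt_sqrt_discrim_of_mul_neg {a b c : ℝ} (hac : a * c < 0) : |b| < √(discrim a b c) :=
  abs_lt.mpr
    ⟨neg_lt.mp (Real.lt_sqrt_of_sq_lt (by rw [discrim]; nlinarith)),
      Real.lt_sqrt_of_sq_lt (by rw [discrim]; nlinarith)⟩

theorem pos_and_quadratic_eq_zero_iff {a b c : ℝ} (ha : 0 < a) (hc : c < 0) (x : ℝ) :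
    (0 < x ∧ a * x ^ 2 + b * x + c = 0) ↔ x = (-b + √(discrim a b c)) / (2 * a) := by
  set s := √(discrim a b c)
  have hbs : |b| < s := abs_lt_sqrt_discrim_of_mul_neg (mul_neg_of_pos_of_neg ha hc)
  have hs : discrim a b c = s * s :=
    (Real.mul_self_sqrt (by rw [discrim]; nlinarith [sq_nonneg b])).symm
  have hplus : 0 < (-b + s) / (2 * a) := div_pos (by linarith [le_abs_self b]) (by positivity)
  have hminus : (-b - s) / (2 * a) < 0 :=
    div_neg_of_neg_of_pos (by linarith [neg_abs_le b]) (by positivity)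
  rw [sq, quadratic_eq_zero_iff ha.ne' hs]
  constructor
  · rintro ⟨hx, rfl | rfl⟩
    · rfl
    · exact absurd hx hminus.not_gt
  · rintro rfl
    exact ⟨hplus, Or.inl rfl⟩

theorem zikv_quadratic_unique_positive_root_general
    (Lam bz am mu mum muz dz : ℝ)
    (hLam : 0 < Lam) (hbz : 0 < bz) (ham : 0 < am)
    (hmu : 0 < mu) (hmum : 0 < mum) (hmuz : 0 < muz) (hdz : 0 < dz)
    (κ1 Rzstar Rmax a b c : ℝ)
    (hκ1 : κ1 = muz + dz + mu)
    (hRmax : Rmax = Lam / mu * (dz / κ1))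
    (ha : a = bz * Lam * am * mu / (dz * Rmax))
    (hc : c = κ1 * mu * mum * (1 - Rzstar))
    (h : 1 < Rzstar) :
    c < 0 ∧
      0 < (-b + Real.sqrt (b ^ 2 - 4 * a * c)) / (2 * a) ∧
      a * ((-b + Real.sqrt (b ^ 2 - 4 * a * c)) / (2 * a)) ^ 2 +
        b * ((-b + Real.sqrt (b ^ 2 - 4 * a * c)) / (2 * a)) + c = 0 ∧
      ∀ R : ℝ, 0 < R → a * R ^ 2 + b * R + c = 0 →
        R = (-b + Real.sqrt (b ^ 2 - 4 * a * c)) / (2 * a) := by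
  have hκ : 0 < κ1 := by rw [hκ1]; positivity
  have ha_pos : 0 < a := by rw [ha, hRmax]; positivity
  have hc_neg : c < 0 := by rw [hc]; exact mul_neg_of_pos_of_neg (by positivity) (by linarith)
  have hroot := (pos_and_quadratic_eq_zero_iff (b := b) ha_pos hc_neg _).mpr rfl
  exact ⟨hc_neg, hroot.1, hroot.2,
    fun R hR hR0 => (pos_and_quadratic_eq_zero_iff ha_pos hc_neg R).mp ⟨hR, hR0⟩⟩

theorem zikv_quadratic_unique_positive_root
    (Lam bz bm am Lm mu mum muz dz : ℝ)
    (hLam : 0 < Lam) (hbz : 0 < bz) (hbm : 0 < bm) (ham : 0 < am) (hLm : 0 < Lm)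
    (hmu : 0 < mu) (hmum : 0 < mum) (hmuz : 0 < muz) (hdz : 0 < dz)
    (κ1 Rz1 Rz2bar Rzstar Rmax a b c : ℝ)
    (hκ1 : κ1 = muz + dz + mu)
    (hRz1 : Rz1 = bz * Lam / (2 * mu * κ1))
    (hRz2bar : Rz2bar = bm * am * Lm * Lam / (mu * mum ^ 2 * κ1))
    (hRzstar : Rzstar = 2 * Rz1 + Rz2bar)
    (hRmax : Rmax = Lam / mu * (dz / κ1))
    (ha : a = bz * Lam * am * mu / (dz * Rmax))
    (hb : b = mu * κ1 / dz * (bm * am * Lm / mum + bz * mum + am * mu * (1 - 2 * Rz1)))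
    (hc : c = κ1 * mu * mum * (1 - Rzstar))
    (h : 1 < Rzstar) :
    c < 0 ∧
      0 < (-b + Real.sqrt (b ^ 2 - 4 * a * c)) / (2 * a) ∧
      a * ((-b + Real.sqrt (b ^ 2 - 4 * a * c)) / (2 * a)) ^ 2 +
        b * ((-b + Real.sqrt (b ^ 2 - 4 * a * c)) / (2 * a)) + c = 0 ∧
      ∀ R : ℝ, 0 < R → a * R ^ 2 + b * R + c = 0 →
        R = (-b + Real.sqrt (b ^ 2 - 4 * a * c)) / (2 * a) :=
  zikv_quadratic_unique_positive_root_general Lam bz am mu mum muz dz hLam hbz ham hmu hmum hmuz hdz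
    κ1 Rzstar Rmax a b c hκ1 hRmax ha hc h
end

section
/- For all S > 0, S_m > 0 and arbitrary reals I_z, I_m, the following identity holds: (1 − Λ/(μS))(Λ − β_m I_m S − β_z I_z S − μ S) + (β_m I_m S + β_z I_z S − κ_1 I_z) + (β_m Λ/(μ μ_m))(1 − Λ_m/(μ_m S_m))(Λ_m − α_m I_z S_m − μ_m S_m) + (β_m Λ/(μ μ_m))(α_m I_z S_m − μ_m I_m) = −(Λ − μS)²/(μS) − (β_m Λ/(μ μ_m²))(Λ_m − μ_m S_m)²/S_m + κ_1 (R_z^* − 1) I_z. In particular, if R_z^* ≤ 1 and I_z ≥ 0, this quantity (the orbital derivative of the Lyapunov function for the ZIKV disease-free equilibrium) is nonpositive. -/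
/-- Orbital-derivative identity for the Lyapunov function at the ZIKV disease-free
equilibrium, and its nonpositivity when `R_z^* ≤ 1` and `I_z ≥ 0`. -/
theorem zikv_lyapunov_identity
    (Lam bz bm am Lm mu mum muz dz : ℝ)
    (hLam : 0 < Lam) (hbz : 0 < bz) (hbm : 0 < bm) (ham : 0 < am) (hLm : 0 < Lm)
    (hmu : 0 < mu) (hmum : 0 < mum) (hmuz : 0 < muz) (hdz : 0 < dz)
    (κ1 Rz1 Rz2bar Rzstar : ℝ)
    (hκ1 : κ1 = muz + dz + mu)
    (hRz1 : Rz1 = bz * Lam / (2 * mu * κ1))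
    (hRz2bar : Rz2bar = bm * am * Lm * Lam / (mu * mum ^ 2 * κ1))
    (hRzstar : Rzstar = 2 * Rz1 + Rz2bar) :
    ∀ S Sm Iz Im : ℝ, 0 < S → 0 < Sm →
      ((1 - Lam / (mu * S)) * (Lam - bm * Im * S - bz * Iz * S - mu * S) +
          (bm * Im * S + bz * Iz * S - κ1 * Iz) +
          bm * Lam / (mu * mum) * (1 - Lm / (mum * Sm)) *
            (Lm - am * Iz * Sm - mum * Sm) +
          bm * Lam / (mu * mum) * (am * Iz * Sm - mum * Im)
        = -((Lam - mu * S) ^ 2 / (mu * S)) -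
            bm * Lam / (mu * mum ^ 2) * ((Lm - mum * Sm) ^ 2 / Sm) +
            κ1 * (Rzstar - 1) * Iz) ∧
      (Rzstar ≤ 1 → 0 ≤ Iz →
        (1 - Lam / (mu * S)) * (Lam - bm * Im * S - bz * Iz * S - mu * S) +
          (bm * Im * S + bz * Iz * S - κ1 * Iz) +
          bm * Lam / (mu * mum) * (1 - Lm / (mum * Sm)) *
            (Lm - am * Iz * Sm - mum * Sm) +
          bm * Lam / (mu * mum) * (am * Iz * Sm - mum * Im) ≤ 0) := by
  intro S Sm Iz Im hS hSm
  have hid : ((1 - Lam / (mu * S)) * (Lam - bm * Im * S - bz * Iz * S - mu * S) +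
          (bm * Im * S + bz * Iz * S - κ1 * Iz) +
          bm * Lam / (mu * mum) * (1 - Lm / (mum * Sm)) *
            (Lm - am * Iz * Sm - mum * Sm) +
          bm * Lam / (mu * mum) * (am * Iz * Sm - mum * Im)
        = -((Lam - mu * S) ^ 2 / (mu * S)) -
            bm * Lam / (mu * mum ^ 2) * ((Lm - mum * Sm) ^ 2 / Sm) +
            κ1 * (Rzstar - 1) * Iz) := by
    have hκ : κ1 ≠ 0 := by rw [hκ1]; positivity
    subst hRzstar hRz1 hRz2bar
    field_simp
    ring
  refine ⟨hid, fun hR hIz => ?_⟩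
  rw [hid]
  have h1 : 0 ≤ (Lam - mu * S) ^ 2 / (mu * S) := by positivity
  have h2 : 0 ≤ bm * Lam / (mu * mum ^ 2) * ((Lm - mum * Sm) ^ 2 / Sm) := by positivity
  have h3 : κ1 * (Rzstar - 1) * Iz ≤ 0 := by
    have hk : 0 < κ1 := by rw [hκ1]; positivity
    exact mul_nonpos_of_nonpos_of_nonneg
      (mul_nonpos_of_nonneg_of_nonpos hk.le (by linarith)) hIz
  linarith
end
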